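/- Suppose f : V → W and f̃ : Ṽ → W are quasi-isomorphisms. If v + s w + ṽ is a cocycle in Cyl(f, f̃) (i.e. ∂^Cyl(v + s w + ṽ) = 0) and v is exact in V (i.e. v = ∂v₁ for some v₁ ∈ V), then ṽ is exact in Ṽ. -/

import Mathlib

/-- An (unbounded) cochain complex of `K`-vector spaces.  The differential is
indexed by pairs of consecutive degrees (`i`, `j` with `i + 1 = j`) to avoid
dependent-type rewriting along equalities of degrees. -/
structure Cochain (K : Type) [Field K] where
  X : ℤ → Type
  [ab : ∀ n : ℤ, AddCommGroup (X n)]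
  [mod : ∀ n : ℤ, Module K (X n)]
  d : ∀ (i j : ℤ), i + 1 = j → (X i →ₗ[K] X j)
  dd : ∀ (i j k : ℤ) (hij : i + 1 = j) (hjk : j + 1 = k) (x : X i),
      d j k hjk (d i j hij x) = 0

attribute [instance] Cochain.ab Cochain.mod

/-- A chain map of cochain complexes of `K`-vector spaces. -/
structure ChainMap (K : Type) [Field K] (V W : Cochain K) where
  f : ∀ n : ℤ, V.X n →ₗ[K] W.X n
  comm : ∀ (i j : ℤ) (h : i + 1 = j) (x : V.X i),
      f j (V.d i j h x) = W.d i j h (f i x)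

/-- `φ` is a quasi-isomorphism: it induces an isomorphism on cohomology in every
degree, i.e. the induced map on cohomology classes is surjective (every cocycle
of the target is, up to a coboundary, the image of a cocycle) and injective
(a cocycle mapping to a coboundary is a coboundary). -/
def IsQuasiIso {K : Type} [Field K] {V W : Cochain K} (φ : ChainMap K V W) : Prop :=
  (∀ (n : ℤ) (y : W.X n), W.d n (n + 1) rfl y = 0 →
      ∃ (x : V.X n) (z : W.X (n - 1)),
        V.d n (n + 1) rfl x = 0 ∧
        φ.f n x = y + W.d (n - 1) n (by omega) z) ∧
  (∀ (n : ℤ) (x : V.X n), V.d n (n + 1) rfl x = 0 →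
      (∃ z : W.X (n - 1), φ.f n x = W.d (n - 1) n (by omega) z) →
      ∃ u : V.X (n - 1), x = V.d (n - 1) n (by omega) u)

/-- Transport along an equality of degrees. -/
def Cochain.cast {K : Type} [Field K] (V : Cochain K) {i j : ℤ} (h : i = j) :
    V.X i →ₗ[K] V.X j := by subst h; exact LinearMap.id

/-- The degree `n` component of the cylinder `Cyl(f, f̃) = V ⊕ sW ⊕ Ṽ`,
namely `V^n × W^(n-1) × Ṽ^n`  (recall `(sW)^n = W^(n-1)`). -/
abbrev CylX {K : Type} [Field K] (V W Vt : Cochain K) (n : ℤ) : Type :=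
  V.X n × W.X (n - 1) × Vt.X n

/-- The cylinder differential `∂^Cyl (v + s w + ṽ) = ∂v + s (f v - ∂w + f̃ ṽ) + ∂ṽ`. -/
def cylD {K : Type} [Field K] {V W Vt : Cochain K}
    (f : ChainMap K V W) (ft : ChainMap K Vt W)
    (i j : ℤ) (h : i + 1 = j) : CylX V W Vt i → CylX V W Vt j :=
  fun p =>
    (V.d i j h p.1,
     W.cast (show i = j - 1 by omega) (f.f i p.1)
       - W.d (i - 1) (j - 1) (by omega) p.2.1
       + W.cast (show i = j - 1 by omega) (ft.f i p.2.2),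
     Vt.d i j h p.2.2)

/-!
The middle component of the cylinder cocycle condition reads `f v - ∂w + f̃ ṽ = 0`. If `v = ∂v₁`,
then `f v = ∂(f v₁)`, so `f̃ ṽ = ∂(w - f v₁)` is a coboundary; since `ṽ` is a cocycle and `f̃` is
injective on cohomology, `ṽ` itself is a coboundary.
-/

namespace Cochain

variable {K : Type} [Field K] (V : Cochain K)

@[simp]
lemma cast_cast {i j : ℤ} (h : i = j) (h' : j = i) (x : V.X i) :
    V.cast h' (V.cast h x) = x := by
  subst h; rfl

@[simp]
lemma cast_d {i j j' : ℤ} (hj : j = j') (h : i + 1 = j) (x : V.X i) :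
    V.cast hj (V.d i j h x) = V.d i j' (hj ▸ h) x := by
  subst hj; rfl

@[simp]
lemma cast_eq_zero_iff {i j : ℤ} (h : i = j) (x : V.X i) : V.cast h x = 0 ↔ x = 0 := by
  subst h; rfl

end Cochain

lemma cylD_eq_zero_iff {K : Type} [Field K] {V W Vt : Cochain K}
    (f : ChainMap K V W) (ft : ChainMap K Vt W) (n : ℤ)
    (v : V.X n) (w : W.X (n - 1)) (vt : Vt.X n) :
    cylD f ft n (n + 1) rfl (v, w, vt) = 0 ↔
      V.d n (n + 1) rfl v = 0 ∧
      f.f n v - W.d (n - 1) n (by omega) w + ft.f n vt = 0 ∧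
      Vt.d n (n + 1) rfl vt = 0 := by
  have e : n + 1 - 1 = n := by omega
  have hmid : W.cast e (W.cast (show n = n + 1 - 1 by omega) (f.f n v)
        - W.d (n - 1) (n + 1 - 1) (by omega) w
        + W.cast (show n = n + 1 - 1 by omega) (ft.f n vt)) =
      f.f n v - W.d (n - 1) n (by omega) w + ft.f n vt := by
    simp only [map_add, map_sub, Cochain.cast_cast, Cochain.cast_d]
  simp only [cylD, Prod.mk_eq_zero, ← hmid, Cochain.cast_eq_zero_iff]

/-- If `f` and `f̃` are quasi-isomorphisms, `v + s w + ṽ` is a cocycle in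
`Cyl(f, f̃)` and `v` is exact in `V`, then `ṽ` is exact in `Ṽ`. -/
theorem cylinder_cocycle_exact_component {K : Type} [Field K]
    {V W Vt : Cochain K} (f : ChainMap K V W) (ft : ChainMap K Vt W)
    (hft : IsQuasiIso ft)
    (n : ℤ) (v : V.X n) (w : W.X (n - 1)) (vt : Vt.X n)
    (hz : cylD f ft n (n + 1) rfl (v, w, vt) = 0)
    (hv : ∃ v₁ : V.X (n - 1), v = V.d (n - 1) n (by omega) v₁) :
    ∃ u : Vt.X (n - 1), vt = Vt.d (n - 1) n (by omega) u := by
  obtain ⟨v₁, rfl⟩ := hv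
  obtain ⟨-, hmid, hvt⟩ := (cylD_eq_zero_iff f ft n _ w vt).1 hz
  have hcob : ft.f n vt = W.d (n - 1) n (by omega) (w - f.f (n - 1) v₁) := by
    rw [eq_neg_of_add_eq_zero_right hmid, neg_sub, map_sub, ← f.comm]
  exact hft.2 n vt hvt ⟨_, hcob⟩
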